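/- Let X be a real normed space, Y a real Banach space, θ ≥ 0 and p > 4. Suppose f : X → Y satisfies ‖D_f(x,y)‖ ≤ θ(‖x‖^p + ‖y‖^p) for all x, y in X and f(0) = 0. Then there exist a unique quartic function Q : X → Y and a unique additive function A : X → Y such that ‖f(x) - Q(x) - A(x)‖ ≤ (θ/(3·2^p)) ‖x‖^p (1/(1 - 2^{4-p}) + 1/(1 - 2^{1-p})) for all x in X. -/

import Mathlib

open Filter Topology

/-- The quartic functional equation:
`Q(2x+y) + Q(2x-y) = 4(Q(x+y) + Q(x-y)) + 24 Q(x) - 6 Q(y)`. -/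
def IsQuartic {X Y : Type*} [AddCommGroup X] [Module ℝ X] [AddCommGroup Y] [Module ℝ Y]
    (f : X → Y) : Prop :=
  ∀ x y : X,
    f ((2 : ℝ) • x + y) + f ((2 : ℝ) • x - y) =
      (4 : ℝ) • (f (x + y) + f (x - y)) + (24 : ℝ) • f x - (6 : ℝ) • f y

/-- The difference operator
`D_f(x,y) = 7[f(2x+y) + f(2x-y)] - 28[f(x+y) + f(x-y)] + 3[f(2y) - 2f(y)] - 14[f(2x) - 4f(x)]`. -/
def Dmap {X Y : Type*} [AddCommGroup X] [Module ℝ X] [AddCommGroup Y] [Module ℝ Y]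
    (f : X → Y) (x y : X) : Y :=
  (7 : ℝ) • (f ((2 : ℝ) • x + y) + f ((2 : ℝ) • x - y))
    - (28 : ℝ) • (f (x + y) + f (x - y))
    + (3 : ℝ) • (f ((2 : ℝ) • y) - (2 : ℝ) • f y)
    - (14 : ℝ) • (f ((2 : ℝ) • x) - (4 : ℝ) • f x)

/-!
Split `f` into its even part `g` and odd part `h`; both inherit the bound on `D`. At `x = 0`,
`D_g(0, y) = 3 (g(2y) - 16 g(y))` and `D_h(0, y) = 3 (h(2y) - 2 h(y))`, so `g` and `h` are
approximately homogeneous of degrees 16 and 2 under doubling, with error `O(‖y‖^p)`. As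
`16, 2 < 2^p`, the sequences `16^n g(2^{-n} x)` and `2^n h(2^{-n} x)` are Cauchy (Hyers' direct
method); their limits `Q` and `A` satisfy `D = 0`, and an even (odd) solution of `D = 0` is quartic
(additive). For uniqueness, `Q - Q'` is `O(‖x‖^p)` and gets multiplied by 16 under doubling, so
it vanishes; the same argument with 2 applies to `A - A'`.
-/

section Algebra

variable {X Y : Type*} [AddCommGroup X] [AddCommGroup Y] [Module ℝ Y]

noncomputable def evenPart (f : X → Y) (x : X) : Y := (2⁻¹ : ℝ) • (f x + f (-x))

noncomputable def oddPart (f : X → Y) (x : X) : Y := (2⁻¹ : ℝ) • (f x - f (-x))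

lemma evenPart_neg (f : X → Y) (x : X) : evenPart f (-x) = evenPart f x := by
  simp only [evenPart, neg_neg, add_comm]

lemma oddPart_neg (f : X → Y) (x : X) : oddPart f (-x) = -oddPart f x := by
  simp only [oddPart, neg_neg, ← smul_neg, neg_sub]

variable [Module ℝ X]

lemma Dmap_evenPart (f : X → Y) (x y : X) :
    Dmap (evenPart f) x y = (2⁻¹ : ℝ) • (Dmap f x y + Dmap f (-x) (-y)) := by
  simp only [Dmap, evenPart, sub_eq_add_neg, neg_add, neg_neg, smul_neg]
  module

lemma Dmap_oddPart (f : X → Y) (x y : X) :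
    Dmap (oddPart f) x y = (2⁻¹ : ℝ) • (Dmap f x y - Dmap f (-x) (-y)) := by
  simp only [Dmap, oddPart, sub_eq_add_neg, neg_add, neg_neg, smul_neg]
  module

lemma Dmap_smul_comp_smul (c a : ℝ) (f : X → Y) (x y : X) :
    Dmap (fun z => c • f (a • z)) x y = c • Dmap f (a • x) (a • y) := by
  simp only [Dmap, smul_add, smul_sub, smul_comm a (2 : ℝ)]
  module

lemma Dmap_zero_left (f : X → Y) (y : X) :
    Dmap f 0 y =
      (3 : ℝ) • f ((2 : ℝ) • y) - (27 : ℝ) • f y - (21 : ℝ) • f (-y) + (42 : ℝ) • f 0 := by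
  simp only [Dmap, smul_zero, zero_add, zero_sub]
  module

lemma Dmap_zero_zero (f : X → Y) : Dmap f 0 0 = -(3 : ℝ) • f 0 := by
  rw [Dmap_zero_left, smul_zero, neg_zero]
  module

lemma Dmap_zero_left_of_even {f : X → Y} (hf : ∀ x, f (-x) = f x) (hf0 : f 0 = 0) (y : X) :
    Dmap f 0 y = (3 : ℝ) • (f ((2 : ℝ) • y) - (16 : ℝ) • f y) := by
  rw [Dmap_zero_left, hf, hf0]
  module

lemma Dmap_zero_left_of_odd {f : X → Y} (hf : ∀ x, f (-x) = -f x) (hf0 : f 0 = 0) (y : X) :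
    Dmap f 0 y = (3 : ℝ) • (f ((2 : ℝ) • y) - (2 : ℝ) • f y) := by
  rw [Dmap_zero_left, hf, hf0]
  module

lemma map_zero_of_Dmap_eq_zero {f : X → Y} (hD : ∀ x y, Dmap f x y = 0) : f 0 = 0 := by
  have h := hD 0 0
  rw [Dmap_zero_zero] at h
  exact (smul_eq_zero.mp h).resolve_left (by norm_num)

namespace IsQuartic

variable {Q : X → Y}

lemma map_zero (hQ : IsQuartic Q) : Q 0 = 0 := by
  have h := hQ 0 0
  simp only [smul_zero, add_zero, sub_zero] at h
  have h24 : (24 : ℝ) • Q 0 = 0 := by linear_combination (norm := module) -h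
  exact (smul_eq_zero.mp h24).resolve_left (by norm_num)

lemma map_neg (hQ : IsQuartic Q) (x : X) : Q (-x) = Q x := by
  have h := hQ 0 x
  simp only [smul_zero, zero_add, zero_sub, hQ.map_zero] at h
  linear_combination (norm := module) (-3⁻¹ : ℝ) • h

lemma map_two_smul (hQ : IsQuartic Q) (x : X) : Q ((2 : ℝ) • x) = (16 : ℝ) • Q x := by
  have h := hQ x 0
  simp only [add_zero, sub_zero, hQ.map_zero] at h
  linear_combination (norm := module) (2⁻¹ : ℝ) • h

end IsQuartic

lemma isQuartic_of_Dmap_eq_zero {Q : X → Y} (hD : ∀ x y, Dmap Q x y = 0)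
    (heven : ∀ x, Q (-x) = Q x) : IsQuartic Q := by
  have hdouble (y : X) : Q ((2 : ℝ) • y) = (16 : ℝ) • Q y := by
    have h := hD 0 y
    rw [Dmap_zero_left_of_even heven (map_zero_of_Dmap_eq_zero hD)] at h
    linear_combination (norm := module) (3⁻¹ : ℝ) • h
  intro x y
  have h := hD x y
  rw [Dmap, hdouble, hdouble] at h
  linear_combination (norm := module) (7⁻¹ : ℝ) • h

lemma map_add_of_Dmap_eq_zero {A : X → Y} (hD : ∀ x y, Dmap A x y = 0)
    (hodd : ∀ x, A (-x) = -A x) (x y : X) : A (x + y) = A x + A y := by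
  have hdouble (y : X) : A ((2 : ℝ) • y) = (2 : ℝ) • A y := by
    have h := hD 0 y
    rw [Dmap_zero_left_of_odd hodd (map_zero_of_Dmap_eq_zero hD)] at h
    linear_combination (norm := module) (3⁻¹ : ℝ) • h
  have hE (x y : X) : A ((2 : ℝ) • x + y) + A ((2 : ℝ) • x - y)
      = (4 : ℝ) • (A (x + y) + A (x - y)) - (4 : ℝ) • A x := by
    have h := hD x y
    rw [Dmap, hdouble, hdouble] at h
    linear_combination (norm := module) (7⁻¹ : ℝ) • h
  -- Eliminating `A (x - 2 • y)`, first between `hE x (2 • y)` and `hE y x`, then between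
  -- `hP (x - y) y` and `hP x (-y)`, leaves a relation whose symmetrization is additivity.
  have hP (x y : X) : (4 : ℝ) • A (x + (2 : ℝ) • y)
      = (9 : ℝ) • A (x + y) - (7 : ℝ) • A (x - y) + (2 : ℝ) • A x - (8 : ℝ) • A y := by
    have h₁ := hE x ((2 : ℝ) • y)
    have h₂ := hE y x
    rw [← smul_add, ← smul_sub, hdouble, hdouble] at h₁
    rw [add_comm ((2 : ℝ) • y) x, ← neg_sub x, hodd, add_comm y x, ← neg_sub x y, hodd]
      at h₂
    linear_combination (norm := module) (2 : ℝ) • h₂ - (2⁻¹ : ℝ) • h₁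
  have hR (x y : X) :
      (3 : ℝ) • A (x + y) = (8 : ℝ) • A y + (5 : ℝ) • A (x - y) - (2 : ℝ) • A x := by
    have h₁ := hP (x - y) y
    have h₂ := hP x (-y)
    rw [show x - y + (2 : ℝ) • y = x + y by module, sub_add_cancel,
      show x - y - y = x - (2 : ℝ) • y by module] at h₁
    rw [show x + (2 : ℝ) • -y = x - (2 : ℝ) • y by module, ← sub_eq_add_neg,
      sub_neg_eq_add, hodd] at h₂
    linear_combination (norm := module) (7 / 11 : ℝ) • h₂ - (4 / 11 : ℝ) • h₁
  have h := hR y x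
  rw [add_comm y, ← neg_sub x, hodd] at h
  linear_combination (norm := module) (6⁻¹ : ℝ) • (hR x y + h)

lemma map_eq_pow_smul_map_inv_two_pow_smul {F : X → Y} {c : ℝ}
    (hF : ∀ x, F ((2 : ℝ) • x) = c • F x) (n : ℕ) (x : X) :
    F x = c ^ n • F ((2⁻¹ : ℝ) ^ n • x) := by
  induction n with
  | zero => simp
  | succ n ih =>
    rw [ih, pow_succ c, mul_smul, ← hF, pow_succ', mul_smul, smul_inv_smul₀ (two_ne_zero' ℝ)]

end Algebra

lemma tendsto_Dmap {X Y ι : Type*} [AddCommGroup X] [Module ℝ X] [AddCommGroup Y] [Module ℝ Y]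
    [TopologicalSpace Y] [IsTopologicalAddGroup Y] [ContinuousConstSMul ℝ Y]
    {l : Filter ι} {F : ι → X → Y} {L : X → Y}
    (hF : ∀ x, Tendsto (fun i => F i x) l (𝓝 (L x))) (x y : X) :
    Tendsto (fun i => Dmap (F i) x y) l (𝓝 (Dmap L x y)) :=
  ((((hF _).add (hF _)).const_smul _).sub (((hF _).add (hF _)).const_smul _)).add
    (((hF _).sub ((hF _).const_smul _)).const_smul _) |>.sub
    (((hF _).sub ((hF _).const_smul _)).const_smul _)

section Normed

variable {X Y : Type*} [NormedAddCommGroup Y] [NormedSpace ℝ Y]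

lemma norm_inv_two_smul_add_le {a b : Y} {r : ℝ} (ha : ‖a‖ ≤ r) (hb : ‖b‖ ≤ r) :
    ‖(2⁻¹ : ℝ) • (a + b)‖ ≤ r := by
  rw [norm_smul, Real.norm_of_nonneg (by norm_num)]
  linarith [norm_add_le_of_le ha hb]

lemma norm_inv_two_smul_sub_le {a b : Y} {r : ℝ} (ha : ‖a‖ ≤ r) (hb : ‖b‖ ≤ r) :
    ‖(2⁻¹ : ℝ) • (a - b)‖ ≤ r := by
  rw [norm_smul, Real.norm_of_nonneg (by norm_num)]
  linarith [norm_sub_le_of_le ha hb]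

lemma norm_evenPart_le [AddCommGroup X] {f : X → Y} {φ : X → ℝ} (hφ : ∀ x, φ (-x) = φ x)
    (hf : ∀ x, ‖f x‖ ≤ φ x) (x : X) : ‖evenPart f x‖ ≤ φ x :=
  norm_inv_two_smul_add_le (hf x) (hφ x ▸ hf (-x))

lemma norm_oddPart_le [AddCommGroup X] {f : X → Y} {φ : X → ℝ} (hφ : ∀ x, φ (-x) = φ x)
    (hf : ∀ x, ‖f x‖ ≤ φ x) (x : X) : ‖oddPart f x‖ ≤ φ x :=
  norm_inv_two_smul_sub_le (hf x) (hφ x ▸ hf (-x))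

variable [NormedAddCommGroup X] [NormedSpace ℝ X] {θ p : ℝ}

lemma norm_Dmap_evenPart_le {f : X → Y}
    (hD : ∀ x y, ‖Dmap f x y‖ ≤ θ * (‖x‖ ^ p + ‖y‖ ^ p)) (x y : X) :
    ‖Dmap (evenPart f) x y‖ ≤ θ * (‖x‖ ^ p + ‖y‖ ^ p) := by
  rw [Dmap_evenPart]
  exact norm_inv_two_smul_add_le (hD x y) (by simpa only [norm_neg] using hD (-x) (-y))

lemma norm_Dmap_oddPart_le {f : X → Y}
    (hD : ∀ x y, ‖Dmap f x y‖ ≤ θ * (‖x‖ ^ p + ‖y‖ ^ p)) (x y : X) :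
    ‖Dmap (oddPart f) x y‖ ≤ θ * (‖x‖ ^ p + ‖y‖ ^ p) := by
  rw [Dmap_oddPart]
  exact norm_inv_two_smul_sub_le (hD x y) (by simpa only [norm_neg] using hD (-x) (-y))

lemma map_zero_of_norm_Dmap_le (hp : 0 < p) {f : X → Y}
    (hD : ∀ x y, ‖Dmap f x y‖ ≤ θ * (‖x‖ ^ p + ‖y‖ ^ p)) : f 0 = 0 := by
  have h := hD 0 0
  rw [Dmap_zero_zero, norm_zero, Real.zero_rpow hp.ne', add_zero, mul_zero,
    norm_le_zero_iff] at h
  exact (smul_eq_zero.mp h).resolve_left (by norm_num)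

lemma norm_map_two_smul_sub_le_of_norm_Dmap_le {c : ℝ} (hp : 0 < p) {e : X → Y}
    (hD : ∀ x y, ‖Dmap e x y‖ ≤ θ * (‖x‖ ^ p + ‖y‖ ^ p))
    (hDe : ∀ y, Dmap e 0 y = (3 : ℝ) • (e ((2 : ℝ) • y) - c • e y)) (x : X) :
    ‖e ((2 : ℝ) • x) - c • e x‖ ≤ θ / 3 * ‖x‖ ^ p := by
  have h := hD 0 x
  rw [hDe, norm_smul, Real.norm_ofNat, norm_zero, Real.zero_rpow hp.ne', zero_add] at h
  linarith

lemma norm_inv_two_pow_smul_rpow (x : X) (p : ℝ) (n : ℕ) :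
    ‖(2⁻¹ : ℝ) ^ n • x‖ ^ p = ((2 : ℝ) ^ p)⁻¹ ^ n * ‖x‖ ^ p := by
  rw [norm_smul, Real.mul_rpow (by positivity) (norm_nonneg x), norm_pow, norm_inv,
    Real.norm_two, ← Real.rpow_pow_comm (by norm_num), Real.inv_rpow zero_le_two]

lemma two_lt_two_rpow (hp : 1 < p) : (2 : ℝ) < 2 ^ p :=
  calc (2 : ℝ) = 2 ^ (1 : ℝ) := (Real.rpow_one 2).symm
    _ < 2 ^ p := Real.rpow_lt_rpow_of_exponent_lt one_lt_two hp

lemma sixteen_lt_two_rpow (hp : 4 < p) : (16 : ℝ) < 2 ^ p :=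
  calc (16 : ℝ) = 2 ^ (4 : ℝ) := by norm_num
    _ < 2 ^ p := Real.rpow_lt_rpow_of_exponent_lt one_lt_two hp

lemma mul_inv_two_rpow_lt_one {c : ℝ} (hc : c < 2 ^ p) : c * ((2 : ℝ) ^ p)⁻¹ < 1 := by
  rwa [← div_eq_mul_inv, div_lt_one (by positivity)]

lemma eq_zero_of_map_two_smul_eq_smul {F : X → Y} {c C : ℝ} (hc₀ : 0 ≤ c) (hc : c < 2 ^ p)
    (hF : ∀ x, F ((2 : ℝ) • x) = c • F x) (hle : ∀ x, ‖F x‖ ≤ C * ‖x‖ ^ p) : F = 0 := by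
  funext x
  set r := c * ((2 : ℝ) ^ p)⁻¹
  have hbound (n : ℕ) : ‖F x‖ ≤ C * ‖x‖ ^ p * r ^ n :=
    calc ‖F x‖ = c ^ n * ‖F ((2⁻¹ : ℝ) ^ n • x)‖ := by
          rw [map_eq_pow_smul_map_inv_two_pow_smul hF n, norm_smul,
            Real.norm_of_nonneg (pow_nonneg hc₀ n)]
      _ ≤ c ^ n * (C * ‖(2⁻¹ : ℝ) ^ n • x‖ ^ p) := by gcongr; exact hle _
      _ = C * ‖x‖ ^ p * r ^ n := by rw [norm_inv_two_pow_smul_rpow, mul_pow]; ring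
  have hlim : Tendsto (fun n : ℕ => C * ‖x‖ ^ p * r ^ n) atTop (𝓝 0) := by
    simpa using (tendsto_pow_atTop_nhds_zero_of_lt_one (by positivity)
      (mul_inv_two_rpow_lt_one hc)).const_mul (C * ‖x‖ ^ p)
  exact norm_le_zero_iff.mp (ge_of_tendsto' hlim hbound)

lemma eq_of_norm_sub_sub_le {f Q Q' A A' : X → Y} {C : ℝ} (hp : 4 < p)
    (hQ : IsQuartic Q) (hQ' : IsQuartic Q') (hA : ∀ x y, A (x + y) = A x + A y)
    (hA' : ∀ x y, A' (x + y) = A' x + A' y) (hf : ∀ x, ‖f x - Q x - A x‖ ≤ C * ‖x‖ ^ p)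
    (hf' : ∀ x, ‖f x - Q' x - A' x‖ ≤ C * ‖x‖ ^ p) : Q' = Q ∧ A' = A := by
  have hAodd (x : X) : A (-x) = -A x := (AddMonoidHom.mk' A hA).map_neg x
  have hA'odd (x : X) : A' (-x) = -A' x := (AddMonoidHom.mk' A' hA').map_neg x
  set E : X → Y := fun x => (f x - Q' x - A' x) - (f x - Q x - A x)
  have hE (x : X) : ‖E x‖ ≤ 2 * C * ‖x‖ ^ p := by
    linarith [norm_sub_le_of_le (hf' x) (hf x)]
  have hEven (x : X) : evenPart E x = Q x - Q' x := by
    simp only [E, evenPart, hQ.map_neg, hQ'.map_neg, hAodd, hA'odd]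
    module
  have hOdd (x : X) : oddPart E x = A x - A' x := by
    simp only [E, oddPart, hQ.map_neg, hQ'.map_neg, hAodd, hA'odd]
    module
  have hQQ' : (fun x => Q x - Q' x) = 0 := by
    refine eq_zero_of_map_two_smul_eq_smul (C := 2 * C) (by norm_num) (sixteen_lt_two_rpow hp)
      (fun x => ?_) (fun x => ?_)
    · rw [hQ.map_two_smul, hQ'.map_two_smul, smul_sub]
    · rw [← hEven]
      exact norm_evenPart_le (fun z => by rw [norm_neg]) hE x
  have hAA' : (fun x => A x - A' x) = 0 := by
    refine eq_zero_of_map_two_smul_eq_smul (C := 2 * C) zero_le_two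
      (two_lt_two_rpow (by linarith)) (fun x => ?_) (fun x => ?_)
    · rw [two_smul, hA, hA', two_smul]; abel
    · rw [← hOdd]
      exact norm_oddPart_le (fun z => by rw [norm_neg]) hE x
  exact ⟨funext fun x => (sub_eq_zero.mp (congrFun hQQ' x)).symm,
    funext fun x => (sub_eq_zero.mp (congrFun hAA' x)).symm⟩

variable [CompleteSpace Y]

lemma exists_tendsto_of_norm_map_two_smul_sub_le {c K : ℝ} (hc₀ : 0 ≤ c) (hc : c < 2 ^ p)
    {e : X → Y} (he : ∀ x, ‖e ((2 : ℝ) • x) - c • e x‖ ≤ K * ‖x‖ ^ p) :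
    ∃ L : X → Y,
      (∀ x, Tendsto (fun n : ℕ => c ^ n • e ((2⁻¹ : ℝ) ^ n • x)) atTop (𝓝 (L x))) ∧
        ∀ x, ‖e x - L x‖ ≤ K / (2 ^ p - c) * ‖x‖ ^ p := by
  set r := c * ((2 : ℝ) ^ p)⁻¹
  have hr := mul_inv_two_rpow_lt_one hc
  have hstep (x : X) (n : ℕ) :
      dist (c ^ n • e ((2⁻¹ : ℝ) ^ n • x))
          (c ^ (n + 1) • e ((2⁻¹ : ℝ) ^ (n + 1) • x)) ≤ K * ((2 : ℝ) ^ p)⁻¹ * ‖x‖ ^ p * r ^ n := by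
    set z := (2⁻¹ : ℝ) ^ (n + 1) • x with hz_def
    have hz : (2⁻¹ : ℝ) ^ n • x = (2 : ℝ) • z := by
      rw [hz_def, pow_succ', mul_smul, smul_inv_smul₀ (two_ne_zero' ℝ)]
    calc dist (c ^ n • e ((2⁻¹ : ℝ) ^ n • x)) (c ^ (n + 1) • e z)
        = c ^ n * ‖e ((2 : ℝ) • z) - c • e z‖ := by
          rw [dist_eq_norm, hz, pow_succ, mul_smul, ← smul_sub, norm_smul,
            Real.norm_of_nonneg (pow_nonneg hc₀ n)]
      _ ≤ c ^ n * (K * ‖z‖ ^ p) := by gcongr; exact he z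
      _ = K * ((2 : ℝ) ^ p)⁻¹ * ‖x‖ ^ p * r ^ n := by
          rw [norm_inv_two_pow_smul_rpow, mul_pow]; ring
  choose L hL using fun x =>
    cauchySeq_tendsto_of_complete (cauchySeq_of_le_geometric r _ hr (hstep x))
  refine ⟨L, hL, fun x => ?_⟩
  have h := dist_le_of_le_geometric_of_tendsto₀ r _ hr (hstep x) (hL x)
  rw [pow_zero, one_smul, pow_zero, one_smul, dist_eq_norm] at h
  calc ‖e x - L x‖ ≤ K * ((2 : ℝ) ^ p)⁻¹ * ‖x‖ ^ p / (1 - r) := h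
    _ = K / (2 ^ p - c) * ‖x‖ ^ p := by
      have : (2 : ℝ) ^ p - c ≠ 0 := by linarith
      simp only [r]
      field_simp

lemma exists_Dmap_eq_zero_norm_sub_le {c K : ℝ} (hc₀ : 0 ≤ c) (hc : c < 2 ^ p) {e : X → Y}
    (hD : ∀ x y, ‖Dmap e x y‖ ≤ θ * (‖x‖ ^ p + ‖y‖ ^ p))
    (he : ∀ x, ‖e ((2 : ℝ) • x) - c • e x‖ ≤ K * ‖x‖ ^ p) :
    ∃ L : X → Y, (∀ x y, Dmap L x y = 0) ∧
      ∀ x, ‖e x - L x‖ ≤ K / (2 ^ p - c) * ‖x‖ ^ p := by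
  obtain ⟨L, hL, hbound⟩ := exists_tendsto_of_norm_map_two_smul_sub_le hc₀ hc he
  refine ⟨L, fun x y => ?_, hbound⟩
  set r := c * ((2 : ℝ) ^ p)⁻¹
  set B := θ * (‖x‖ ^ p + ‖y‖ ^ p)
  have hlim := tendsto_Dmap (F := fun n z => c ^ n • e ((2⁻¹ : ℝ) ^ n • z)) hL x y
  simp only [Dmap_smul_comp_smul] at hlim
  have hsmall (n : ℕ) : ‖c ^ n • Dmap e ((2⁻¹ : ℝ) ^ n • x) ((2⁻¹ : ℝ) ^ n • y)‖ ≤ B * r ^ n :=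
    calc ‖c ^ n • Dmap e ((2⁻¹ : ℝ) ^ n • x) ((2⁻¹ : ℝ) ^ n • y)‖
        = c ^ n * ‖Dmap e ((2⁻¹ : ℝ) ^ n • x) ((2⁻¹ : ℝ) ^ n • y)‖ := by
          rw [norm_smul, Real.norm_of_nonneg (pow_nonneg hc₀ n)]
      _ ≤ c ^ n * (θ * (‖(2⁻¹ : ℝ) ^ n • x‖ ^ p + ‖(2⁻¹ : ℝ) ^ n • y‖ ^ p)) := by
          gcongr; exact hD _ _
      _ = B * r ^ n := by
          rw [norm_inv_two_pow_smul_rpow, norm_inv_two_pow_smul_rpow, mul_pow]; ring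
  have hB : Tendsto (fun n : ℕ => B * r ^ n) atTop (𝓝 0) := by
    simpa using (tendsto_pow_atTop_nhds_zero_of_lt_one (by positivity)
      (mul_inv_two_rpow_lt_one hc)).const_mul B
  exact tendsto_nhds_unique hlim (squeeze_zero_norm hsmall hB)

lemma exists_isQuartic_norm_sub_le (hp : 4 < p) {g : X → Y} (heven : ∀ x, g (-x) = g x)
    (hD : ∀ x y, ‖Dmap g x y‖ ≤ θ * (‖x‖ ^ p + ‖y‖ ^ p)) :
    ∃ Q : X → Y, IsQuartic Q ∧ ∀ x, ‖g x - Q x‖ ≤ θ / 3 / (2 ^ p - 16) * ‖x‖ ^ p := by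
  have hg0 := map_zero_of_norm_Dmap_le (by linarith) hD
  obtain ⟨L, hL, hgL⟩ := exists_Dmap_eq_zero_norm_sub_le (by norm_num) (sixteen_lt_two_rpow hp)
    hD (norm_map_two_smul_sub_le_of_norm_Dmap_le (by linarith) hD
      (Dmap_zero_left_of_even heven hg0))
  -- The limit `L` need not be even, but its even part keeps `D = 0` and the distance to `g`.
  refine ⟨evenPart L, isQuartic_of_Dmap_eq_zero (fun x y => ?_) (evenPart_neg L), fun x => ?_⟩
  · rw [Dmap_evenPart, hL, hL, add_zero, smul_zero]
  · have hsplit : g x - evenPart L x = evenPart (fun z => g z - L z) x := by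
      simp only [evenPart, heven]
      module
    rw [hsplit]
    exact norm_evenPart_le (fun z => by rw [norm_neg]) hgL x

lemma exists_map_add_norm_sub_le (hp : 1 < p) {h : X → Y} (hodd : ∀ x, h (-x) = -h x)
    (hD : ∀ x y, ‖Dmap h x y‖ ≤ θ * (‖x‖ ^ p + ‖y‖ ^ p)) :
    ∃ A : X → Y, (∀ x y, A (x + y) = A x + A y) ∧
      ∀ x, ‖h x - A x‖ ≤ θ / 3 / (2 ^ p - 2) * ‖x‖ ^ p := by
  have hh0 := map_zero_of_norm_Dmap_le (by linarith) hD
  obtain ⟨L, hL, hhL⟩ := exists_Dmap_eq_zero_norm_sub_le zero_le_two (two_lt_two_rpow hp) hD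
    (norm_map_two_smul_sub_le_of_norm_Dmap_le (by linarith) hD
      (Dmap_zero_left_of_odd hodd hh0))
  refine ⟨oddPart L, map_add_of_Dmap_eq_zero (fun x y => ?_) (oddPart_neg L), fun x => ?_⟩
  · rw [Dmap_oddPart, hL, hL, sub_zero, smul_zero]
  · have hsplit : h x - oddPart L x = oddPart (fun z => h z - L z) x := by
      simp only [oddPart, hodd]
      module
    rw [hsplit]
    exact norm_oddPart_le (fun z => by rw [norm_neg]) hhL x

end Normed

theorem rassias_stability'_general {X Y : Type*} [NormedAddCommGroup X] [NormedSpace ℝ X]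
    [NormedAddCommGroup Y] [NormedSpace ℝ Y] [CompleteSpace Y]
    (θ p : ℝ) (hp : 4 < p)
    (f : X → Y) (hD : ∀ x y : X, ‖Dmap f x y‖ ≤ θ * (‖x‖ ^ p + ‖y‖ ^ p)) :
    ∃ (Q A : X → Y), IsQuartic Q ∧ (∀ x y : X, A (x + y) = A x + A y) ∧
      (∀ x : X, ‖f x - Q x - A x‖ ≤
        (θ / (3 * (2 : ℝ) ^ p)) * ‖x‖ ^ p *
          (1 / (1 - (2 : ℝ) ^ (4 - p)) + 1 / (1 - (2 : ℝ) ^ (1 - p)))) ∧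
      ∀ Q' A' : X → Y, IsQuartic Q' → (∀ x y : X, A' (x + y) = A' x + A' y) →
        (∀ x : X, ‖f x - Q' x - A' x‖ ≤
          (θ / (3 * (2 : ℝ) ^ p)) * ‖x‖ ^ p *
            (1 / (1 - (2 : ℝ) ^ (4 - p)) + 1 / (1 - (2 : ℝ) ^ (1 - p)))) →
        Q' = Q ∧ A' = A := by
  obtain ⟨Q, hQ, hfQ⟩ :=
    exists_isQuartic_norm_sub_le hp (evenPart_neg f) (norm_Dmap_evenPart_le hD)
  obtain ⟨A, hA, hfA⟩ :=
    exists_map_add_norm_sub_le (by linarith) (oddPart_neg f) (norm_Dmap_oddPart_le hD)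
  have hconst :
      θ / (3 * (2 : ℝ) ^ p) * (1 / (1 - (2 : ℝ) ^ (4 - p)) + 1 / (1 - (2 : ℝ) ^ (1 - p)))
        = θ / 3 / (2 ^ p - 16) + θ / 3 / (2 ^ p - 2) := by
    have h16 : (2 : ℝ) ^ p - 16 ≠ 0 := (sub_pos.mpr (sixteen_lt_two_rpow hp)).ne'
    have h2 : (2 : ℝ) ^ p - 2 ≠ 0 := (sub_pos.mpr (two_lt_two_rpow (by linarith))).ne'
    rw [Real.rpow_sub two_pos, Real.rpow_sub two_pos, Real.rpow_one,
      show (2 : ℝ) ^ (4 : ℝ) = 16 by norm_num]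
    field_simp
  have hfQA (x : X) :
      ‖f x - Q x - A x‖ ≤ (θ / 3 / (2 ^ p - 16) + θ / 3 / (2 ^ p - 2)) * ‖x‖ ^ p :=
    calc ‖f x - Q x - A x‖ = ‖(evenPart f x - Q x) + (oddPart f x - A x)‖ := by
          congr 1; simp only [evenPart, oddPart]; module
      _ ≤ _ := norm_add_le_of_le (hfQ x) (hfA x)
      _ = _ := by ring
  simp_rw [mul_right_comm _ (‖_‖ ^ p), hconst]
  exact ⟨Q, A, hQ, hA, hfQA,
    fun Q' A' hQ' hA' hf' => eq_of_norm_sub_sub_le hp hQ hQ' hA hA' hfQA hf'⟩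

theorem rassias_stability' {X Y : Type*} [NormedAddCommGroup X] [NormedSpace ℝ X]
    [NormedAddCommGroup Y] [NormedSpace ℝ Y] [CompleteSpace Y]
    (θ p : ℝ) (hθ : 0 ≤ θ) (hp : 4 < p)
    (f : X → Y) (hD : ∀ x y : X, ‖Dmap f x y‖ ≤ θ * (‖x‖ ^ p + ‖y‖ ^ p)) (hf0 : f 0 = 0) :
    ∃ (Q A : X → Y), IsQuartic Q ∧ (∀ x y : X, A (x + y) = A x + A y) ∧
      (∀ x : X, ‖f x - Q x - A x‖ ≤
        (θ / (3 * (2 : ℝ) ^ p)) * ‖x‖ ^ p *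
          (1 / (1 - (2 : ℝ) ^ (4 - p)) + 1 / (1 - (2 : ℝ) ^ (1 - p)))) ∧
      ∀ Q' A' : X → Y, IsQuartic Q' → (∀ x y : X, A' (x + y) = A' x + A' y) →
        (∀ x : X, ‖f x - Q' x - A' x‖ ≤
          (θ / (3 * (2 : ℝ) ^ p)) * ‖x‖ ^ p *
            (1 / (1 - (2 : ℝ) ^ (4 - p)) + 1 / (1 - (2 : ℝ) ^ (1 - p)))) →
        Q' = Q ∧ A' = A :=
  rassias_stability'_general θ p hp f hD
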